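/- arXiv:2310.02809 — 8 statements merged into one kernel-verified Lean document; each statement's English description precedes it below -/
import Mathlib

section
/- Let E be a compact metric space and F ⊆ E a Borel set. Let (P_t)_{t ≥ 0} be a family of Markov kernels on E satisfying P_0 = identity kernel and the semigroup property P_{t+s} = P_t ∘ₖ P_s for all s, t ≥ 0, such that each P_t is Feller (for every bounded continuous f : E → ℝ, the map x ↦ ∫ f d(P_t x) is continuous) and such that the semigroup is weakly continuous in time (for every bounded continuous f : E → ℝ and every x ∈ E, the map t ↦ ∫ f d(P_t x) is continuous). Assume that for every s ∈ (0,1] there exists a unique probability measure π_s on E with π_s(E \ F) = 0 that is invariant for the kernel P_s. Then there exists a unique probability measure π on E with π(E \ F) = 0 that is invariant for P_t for every t ≥ 0, and moreover π = π_1. -/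
/-!
If `σ` is invariant for `P (1/n)`, the semigroup property makes it invariant for
`P 1 = P (1/n) ∘ₖ ⋯ ∘ₖ P (1/n)`, so by uniqueness it is `π₁`. Hence `π₁` is invariant for every
`P (1/n)`, and then for every `P q` with `q` a positive rational. By dominated convergence, weak
continuity in time makes `t ↦ ∫ f d(π₁.bind (P t))` continuous for each bounded continuous `f`,
so invariance passes from the dense set of positive rationals to all `t ≥ 0`; bounded continuous
functions determine finite Borel measures on a metric space.
-/

open MeasureTheory ProbabilityTheory Set
open scoped BoundedContinuousFunction

namespace MeasureTheory.Measure

theorem integral_bind {α β F : Type*} [MeasurableSpace α] [MeasurableSpace β]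
    [NormedAddCommGroup F] [NormedSpace ℝ F] {μ : Measure α} {κ : Kernel α β}
    [SFinite μ] [IsSFiniteKernel κ] {f : β → F} (hf : Integrable f (μ.bind κ)) :
    ∫ y, f y ∂(μ.bind κ) = ∫ x, ∫ y, f y ∂κ x ∂μ := by
  rw [Measure.comp_eq_comp_const_apply] at hf ⊢
  rw [Kernel.integral_comp hf, Kernel.const_apply]

end MeasureTheory.Measure

theorem Real.Ici_zero_subset_closure_pos_rat :
    Ici (0 : ℝ) ⊆ closure (Ioi 0 ∩ range ((↑) : ℚ → ℝ)) :=
  calc Ici (0 : ℝ) = closure (Ioi 0) := (closure_Ioi 0).symm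
    _ ⊆ closure (Ioi 0 ∩ range ((↑) : ℚ → ℝ)) :=
      closure_minimal (Rat.denseRange_cast.open_subset_closure_inter isOpen_Ioi) isClosed_closure

namespace ProbabilityTheory.Kernel

variable {α : Type*} [MeasurableSpace α]

section Continuity

variable {T : Type*} [TopologicalSpace T] [FirstCountableTopology T] {s : Set T}

theorem continuousOn_integral_bind {β : Type*} [MeasurableSpace β] [TopologicalSpace β]
    [OpensMeasurableSpace β] {P : T → Kernel α β} (μ : Measure α) [IsFiniteMeasure μ]
    (hMarkov : ∀ t ∈ s, IsMarkovKernel (P t)) (f : β →ᵇ ℝ)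
    (hcont : ∀ x, ContinuousOn (fun t => ∫ y, f y ∂(P t x)) s) :
    ContinuousOn (fun t => ∫ y, f y ∂(μ.bind (P t))) s := by
  have hbind : EqOn (fun t => ∫ x, ∫ y, f y ∂(P t x) ∂μ)
      (fun t => ∫ y, f y ∂(μ.bind (P t))) s := fun t ht => by
    have := hMarkov t ht
    exact (Measure.integral_bind (f.integrable _)).symm
  refine (continuousOn_of_dominated (bound := fun _ => ‖f‖) (fun t ht => ?_) (fun t ht => ?_)
    (integrable_const _) (ae_of_all _ hcont)).congr hbind.symm
  · exact f.continuous.stronglyMeasurable.integral_kernel.aestronglyMeasurable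
  · have := hMarkov t ht
    exact ae_of_all _ fun x => f.norm_integral_le_norm (μ := P t x)

theorem invariant_of_subset_closure [TopologicalSpace α] [HasOuterApproxClosed α] [BorelSpace α]
    {P : T → Kernel α α} {D : Set T} {μ : Measure α} [IsFiniteMeasure μ]
    (hMarkov : ∀ t ∈ s, IsMarkovKernel (P t))
    (hcont : ∀ f : α →ᵇ ℝ, ∀ x, ContinuousOn (fun t => ∫ y, f y ∂(P t x)) s)
    (hDs : D ⊆ s) (hsD : s ⊆ closure D) (hD : ∀ t ∈ D, Invariant (P t) μ) :
    ∀ t ∈ s, Invariant (P t) μ := by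
  intro t ht
  have := hMarkov t ht
  refine ext_of_forall_integral_eq_of_IsFiniteMeasure fun f => ?_
  have hEq : EqOn (fun t => ∫ y, f y ∂(μ.bind (P t))) (fun _ => ∫ y, f y ∂μ) s :=
    EqOn.of_subset_closure (fun t ht => by rw [(hD t ht).def])
      (continuousOn_integral_bind μ hMarkov f (hcont f)) continuousOn_const hDs hsD
  exact hEq ht

end Continuity

section Semigroup

variable {P : ℝ → Kernel α α} {μ : Measure α}

theorem Invariant.natCast_mul {s : ℝ} (h : Invariant (P s) μ)
    (hSemi : ∀ s t : ℝ, 0 ≤ s → 0 ≤ t → P (t + s) = (P t).comp (P s)) (hs : 0 ≤ s)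
    {n : ℕ} (hn : 0 < n) : Invariant (P (n * s)) μ := by
  induction n, hn using Nat.le_induction with
  | base => simpa using h
  | succ n _ ih =>
    rw [Nat.cast_succ, add_one_mul, hSemi s _ hs (by positivity)]
    exact ih.comp h

theorem invariant_ratCast_of_invariant_inv_natCast
    (hSemi : ∀ s t : ℝ, 0 ≤ s → 0 ≤ t → P (t + s) = (P t).comp (P s))
    (hinv : ∀ n : ℕ, 0 < n → Invariant (P (n : ℝ)⁻¹) μ) {q : ℚ} (hq : 0 < q) :
    Invariant (P q) μ := by
  obtain ⟨m, hm⟩ := Int.eq_ofNat_of_zero_le (Rat.num_nonneg.2 hq.le)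
  have hm0 : 0 < m := by have := Rat.num_pos.2 hq; omega
  have hq' : (q : ℝ) = m * (q.den : ℝ)⁻¹ := by
    rw [Rat.cast_def, hm, div_eq_mul_inv, Int.cast_natCast]
  rw [hq']
  exact (hinv q.den q.pos).natCast_mul hSemi (by positivity) hm0

theorem invariant_inv_natCast_of_unique_one
    (hSemi : ∀ s t : ℝ, 0 ≤ s → 0 ≤ t → P (t + s) = (P t).comp (P s))
    {C : Measure α → Prop} {π : Measure α} (hπ : ∀ σ, C σ → Invariant (P 1) σ → σ = π)
    {n : ℕ} (hn : 0 < n) (hσ : ∃ σ, C σ ∧ Invariant (P (n : ℝ)⁻¹) σ) :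
    Invariant (P (n : ℝ)⁻¹) π := by
  obtain ⟨σ, hσC, hσ⟩ := hσ
  have h1 : Invariant (P 1) σ := by
    simpa [mul_inv_cancel₀ (Nat.cast_ne_zero.2 hn.ne' : (n : ℝ) ≠ 0)] using
      hσ.natCast_mul hSemi (by positivity) hn
  rwa [← hπ σ hσC h1]

end Semigroup

end ProbabilityTheory.Kernel

theorem feller_semigroup_unique_invariant_general
    {E : Type*} [MeasurableSpace E] [MetricSpace E] [BorelSpace E]
    (F : Set E)
    (P : ℝ → Kernel E E)
    (hMarkov : ∀ t : ℝ, 0 ≤ t → IsMarkovKernel (P t))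
    (hSemi : ∀ s t : ℝ, 0 ≤ s → 0 ≤ t → P (t + s) = (P t).comp (P s))
    (hWeakTimeCont : ∀ f : E → ℝ, Continuous f → ∀ x : E,
      ContinuousOn (fun t => ∫ y, f y ∂(P t x)) (Set.Ici (0 : ℝ)))
    (hUnique : ∀ s ∈ Set.Ioc (0 : ℝ) 1,
      ∃! π : Measure E, IsProbabilityMeasure π ∧ π Fᶜ = 0 ∧
        π.bind (fun x => P s x) = π) :
    ∃ π : Measure E, IsProbabilityMeasure π ∧ π Fᶜ = 0 ∧
      (∀ t : ℝ, 0 ≤ t → π.bind (fun x => P t x) = π) ∧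
      (∀ π' : Measure E, IsProbabilityMeasure π' → π' Fᶜ = 0 →
        (∀ t : ℝ, 0 ≤ t → π'.bind (fun x => P t x) = π') → π' = π) ∧
      (∀ π₁ : Measure E, IsProbabilityMeasure π₁ → π₁ Fᶜ = 0 →
        π₁.bind (fun x => P 1 x) = π₁ → π = π₁) := by
  obtain ⟨π, ⟨hπp, hπF, -⟩, hπuniq⟩ := hUnique 1 ⟨one_pos, le_rfl⟩
  have hπ_inv_nat (n : ℕ) (hn : 0 < n) : Kernel.Invariant (P (n : ℝ)⁻¹) π := by
    obtain ⟨σ, ⟨hσp, hσF, hσ⟩, -⟩ :=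
      hUnique _ ⟨by positivity, inv_le_one_of_one_le₀ (Nat.one_le_cast.2 hn)⟩
    exact Kernel.invariant_inv_natCast_of_unique_one hSemi
      (C := fun σ => IsProbabilityMeasure σ ∧ σ Fᶜ = 0)
      (fun σ hσ h1 => hπuniq σ ⟨hσ.1, hσ.2, h1⟩) hn ⟨σ, ⟨hσp, hσF⟩, hσ⟩
  have hinv : ∀ t ∈ Ici (0 : ℝ), Kernel.Invariant (P t) π :=
    Kernel.invariant_of_subset_closure hMarkov (fun f => hWeakTimeCont f f.continuous)
      (fun t ht => mem_Ici.2 ht.1.le) Real.Ici_zero_subset_closure_pos_rat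
      (by rintro _ ⟨hq, q, rfl⟩
          exact Kernel.invariant_ratCast_of_invariant_inv_natCast hSemi hπ_inv_nat
            (Rat.cast_pos.1 (mem_Ioi.1 hq)))
  exact ⟨π, hπp, hπF, hinv, fun π' h1 h2 h3 => hπuniq π' ⟨h1, h2, h3 1 zero_le_one⟩,
    fun π₁ h1 h2 h3 => (hπuniq π₁ ⟨h1, h2, h3⟩).symm⟩

/-- Let `E` be a compact metric space and `F ⊆ E` a Borel set. Let
`(P t)_{t ≥ 0}` be a Feller Markov semigroup on `E` that is weakly continuous in time.
If for every `s ∈ (0,1]` there is a unique probability measure `π_s` supported in `F`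
invariant for the kernel `P s`, then there is a unique probability measure `π` supported
in `F` invariant for every `P t`, `t ≥ 0`; moreover `π` coincides with `π_1` (i.e. with any
probability measure supported in `F` invariant for `P 1`). -/
theorem feller_semigroup_unique_invariant
    {E : Type*} [MeasurableSpace E] [MetricSpace E] [CompactSpace E] [BorelSpace E]
    (F : Set E) (hF : MeasurableSet F)
    (P : ℝ → Kernel E E)
    (hMarkov : ∀ t : ℝ, 0 ≤ t → IsMarkovKernel (P t))
    (hId : P 0 = Kernel.id)
    (hSemi : ∀ s t : ℝ, 0 ≤ s → 0 ≤ t → P (t + s) = (P t).comp (P s))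
    (hFeller : ∀ t : ℝ, 0 ≤ t → ∀ f : E → ℝ, Continuous f →
      Continuous fun x => ∫ y, f y ∂(P t x))
    (hWeakTimeCont : ∀ f : E → ℝ, Continuous f → ∀ x : E,
      ContinuousOn (fun t => ∫ y, f y ∂(P t x)) (Set.Ici (0 : ℝ)))
    (hUnique : ∀ s ∈ Set.Ioc (0 : ℝ) 1,
      ∃! π : Measure E, IsProbabilityMeasure π ∧ π Fᶜ = 0 ∧
        π.bind (fun x => P s x) = π) :
    ∃ π : Measure E, IsProbabilityMeasure π ∧ π Fᶜ = 0 ∧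
      (∀ t : ℝ, 0 ≤ t → π.bind (fun x => P t x) = π) ∧
      (∀ π' : Measure E, IsProbabilityMeasure π' → π' Fᶜ = 0 →
        (∀ t : ℝ, 0 ≤ t → π'.bind (fun x => P t x) = π') → π' = π) ∧
      (∀ π₁ : Measure E, IsProbabilityMeasure π₁ → π₁ Fᶜ = 0 →
        π₁.bind (fun x => P 1 x) = π₁ → π = π₁) :=
  feller_semigroup_unique_invariant_general F P hMarkov hSemi hWeakTimeCont hUnique
end

section
/- Let d ≥ 2, σ > 0, and let A be a d×d real matrix satisfying conditions [C1] and [C2] with parameter σ. Then there exists δ > 0 such that for every skew-symmetric d×d real matrix E with ‖E‖ < δ (operator norm), the matrix A + E satisfies condition [C2] with parameter σ, i.e. there exist a vector α' ∈ ℝ^d with strictly positive entries summing to 1 and a constant c' ∈ ℝ such that ∑_j ((A+E)_{ij} − σ²/2) α'_j = c' for every i. -/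
/-!
Subtract `σ²/2` from every entry of `A`. By [C1] the quadratic form of the resulting matrix `M`
equals `-σ²/2 ‖x‖²` on the hyperplane `∑ xᵢ = 0`, so the square linear system
`M x = c 𝟙`, `∑ xᵢ = 1` in the unknowns `(x, c)` is nonsingular. Its solution therefore depends
continuously on the matrix, and the positivity of the solution given by [C2] persists on a
neighbourhood of `A`.
-/

open Matrix Filter Topology

namespace Matrix

variable {ι R : Type*} [Fintype ι]

theorem two_mul_dotProduct_mulVec_of_sum_eq_zero [CommRing R] {A : Matrix ι ι R} {s : R}
    (hA : ∀ i j, i ≠ j → A i j + A j i - A i i - A j j = s) {x : ι → R} (hx : ∑ i, x i = 0) :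
    2 * (x ⬝ᵥ A *ᵥ x) = -(s * (x ⬝ᵥ x)) := by
  classical
  have hterm : ∀ i j, x i * x j * (A i j + A j i - A i i - A j j)
      = s * (x i * x j) - if i = j then s * (x i * x i) else 0 := by
    intro i j
    rcases eq_or_ne i j with rfl | hij
    · simp
    · rw [hA i j hij, if_neg hij]; ring
  have hsum := Finset.sum_congr rfl fun i (_ : i ∈ Finset.univ) =>
    Finset.sum_congr rfl fun j (_ : j ∈ Finset.univ) => hterm i j
  simp only [mul_add, mul_sub, Finset.sum_add_distrib, Finset.sum_sub_distrib,
    Finset.sum_ite_eq, Finset.mem_univ, if_true] at hsum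
  rw [Finset.sum_comm (f := fun i j => x i * x j * A j i),
    Finset.sum_comm (f := fun i j => x i * x j * A j j)] at hsum
  -- every term containing a factor `∑ j, x j` vanishes
  simp only [← Finset.sum_mul, ← Finset.mul_sum, hx, mul_zero, zero_mul, Finset.sum_const_zero,
    sub_zero, zero_sub] at hsum
  simp only [dotProduct, mulVec, Finset.mul_sum]
  rw [← Finset.mul_sum, ← hsum, ← Finset.sum_add_distrib]
  refine Finset.sum_congr rfl fun i _ => ?_
  rw [← Finset.sum_add_distrib]
  exact Finset.sum_congr rfl fun j _ => by ring

/-- The matrix of the linear system `M x = c 𝟙`, `∑ i, x i = 1` in the unknowns `(x, c)`. -/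
def bordered [Zero R] [One R] [Neg R] (M : Matrix ι ι R) : Matrix (ι ⊕ Unit) (ι ⊕ Unit) R :=
  fromBlocks M (-replicateCol Unit 1) (replicateRow Unit 1) 0

theorem bordered_mulVec [Ring R] (M : Matrix ι ι R) (v : ι ⊕ Unit → R) :
    bordered M *ᵥ v =
      Sum.elim (M *ᵥ (v ∘ Sum.inl) - fun _ => v (Sum.inr ())) fun _ => ∑ i, v (Sum.inl i) := by
  rw [bordered, fromBlocks_mulVec]
  ext (i | u) <;> simp [mulVec, dotProduct, sub_eq_add_neg]

theorem det_bordered_ne_zero [Field R] [DecidableEq ι] [Nonempty ι] {M : Matrix ι ι R}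
    (hM : ∀ x : ι → R, ∑ i, x i = 0 → x ⬝ᵥ M *ᵥ x = 0 → x = 0) : (bordered M).det ≠ 0 := by
  intro hdet
  obtain ⟨v, hv, hMv⟩ := exists_mulVec_eq_zero_iff.2 hdet
  rw [bordered_mulVec] at hMv
  have hrow : M *ᵥ (v ∘ Sum.inl) = fun _ => v (Sum.inr ()) :=
    sub_eq_zero.1 (congrArg (· ∘ Sum.inl) hMv)
  have hsum : ∑ i, v (Sum.inl i) = 0 := congrFun hMv (Sum.inr ())
  have hx : v ∘ Sum.inl = 0 := hM _ hsum <| by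
    rw [hrow, dotProduct_comm]
    simp [dotProduct, ← Finset.mul_sum, hsum]
  have hc : v (Sum.inr ()) = 0 := by
    simpa [hx] using (congrFun hrow (Classical.arbitrary ι)).symm
  exact hv <| funext fun
    | Sum.inl i => congrFun hx i
    | Sum.inr () => hc

theorem det_bordered_ne_zero_of_add_transpose_sub_diag_eq [Field R] [LinearOrder R]
    [IsStrictOrderedRing R] [DecidableEq ι] [Nonempty ι] {M : Matrix ι ι R} {s : R} (hs : s ≠ 0)
    (hM : ∀ i j, i ≠ j → M i j + M j i - M i i - M j j = s) : (bordered M).det ≠ 0 := by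
  refine det_bordered_ne_zero fun x hx hq => dotProduct_self_eq_zero.1 ?_
  have hquad := two_mul_dotProduct_mulVec_of_sum_eq_zero hM hx
  rw [hq, mul_zero, zero_eq_neg, mul_eq_zero] at hquad
  exact hquad.resolve_left hs

end Matrix

def HasInteriorEqualizer {ι : Type*} [Fintype ι] (M : Matrix ι ι ℝ) : Prop :=
  ∃ (α : ι → ℝ) (c : ℝ), (∀ i, 0 < α i) ∧ ∑ i, α i = 1 ∧ ∀ i, ∑ j, M i j * α j = c

namespace HasInteriorEqualizer

variable {ι : Type*} [Fintype ι] {M : Matrix ι ι ℝ}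

theorem nonempty (hM : HasInteriorEqualizer M) : Nonempty ι := by
  obtain ⟨α, -, -, hsum, -⟩ := hM
  exact Finset.univ_nonempty_iff.1 (Finset.nonempty_of_sum_ne_zero (hsum ▸ one_ne_zero))

theorem eventually_nhds [DecidableEq ι] (hM : HasInteriorEqualizer M)
    (hdet : (bordered M).det ≠ 0) : ∀ᶠ N in 𝓝 M, HasInteriorEqualizer N := by
  obtain ⟨α, c, hpos, hsum, hrow⟩ := hM
  set rhs : ι ⊕ Unit → ℝ := Sum.elim 0 1
  set sol : Matrix ι ι ℝ → ι ⊕ Unit → ℝ := fun N => (bordered N)⁻¹ *ᵥ rhs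
  have hbordered : Continuous (bordered : Matrix ι ι ℝ → _) :=
    continuous_id.matrix_fromBlocks continuous_const continuous_const continuous_const
  have hsolM : sol M = Sum.elim α fun _ => c := by
    have hαc : bordered M *ᵥ Sum.elim α (fun _ => c) = rhs := by
      rw [bordered_mulVec]
      ext (i | u)
      · simpa [mulVec, dotProduct, sub_eq_zero, rhs] using hrow i
      · simpa [rhs] using hsum
    change (bordered M)⁻¹ *ᵥ rhs = _
    rw [← hαc, mulVec_mulVec, nonsing_inv_mul _ (isUnit_iff_ne_zero.2 hdet), one_mulVec]
  have hsol : ContinuousAt sol M := by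
    have hinv : ContinuousAt Inv.inv (bordered M) :=
      continuousAt_matrix_inv _ (Ring.inverse_eq_inv' (G₀ := ℝ) ▸ continuousAt_inv₀ hdet)
    exact (continuous_id.matrix_mulVec continuous_const).continuousAt.comp
      (hinv.comp hbordered.continuousAt)
  have hsol_pos : ∀ᶠ N in 𝓝 M, ∀ i, 0 < sol N (Sum.inl i) :=
    eventually_all.2 fun i => ((continuous_apply (Sum.inl i)).continuousAt.comp hsol).eventually
      (lt_mem_nhds (by simpa [hsolM] using hpos i))
  have hdet_ne : ∀ᶠ N in 𝓝 M, (bordered N).det ≠ 0 :=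
    hbordered.matrix_det.continuousAt.eventually_ne hdet
  filter_upwards [hsol_pos, hdet_ne] with N hN hNdet
  have hsolves : bordered N *ᵥ sol N = rhs := by
    rw [mulVec_mulVec, mul_nonsing_inv _ (isUnit_iff_ne_zero.2 hNdet), one_mulVec]
  rw [bordered_mulVec] at hsolves
  refine ⟨sol N ∘ Sum.inl, sol N (Sum.inr ()), hN,
    by simpa [rhs] using congrFun hsolves (Sum.inr ()), fun i => ?_⟩
  simpa [mulVec, dotProduct, sub_eq_zero, rhs] using congrFun hsolves (Sum.inl i)

end HasInteriorEqualizer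

open scoped Matrix.Norms.L2Operator

theorem C2_stable_under_small_skew_perturbation_general {d : ℕ}
    (σ : ℝ) (hσ : 0 < σ) (A : Matrix (Fin d) (Fin d) ℝ)
    (hC1 : ∀ i j : Fin d, i ≠ j → A i j + A j i - A i i - A j j = σ ^ 2)
    (hC2 : ∃ (α : Fin d → ℝ) (c : ℝ), (∀ i, 0 < α i) ∧ (∑ i, α i = 1) ∧
        ∀ i, ∑ j, (A i j - σ ^ 2 / 2) * α j = c) :
    ∃ δ > (0 : ℝ), ∀ E : Matrix (Fin d) (Fin d) ℝ, Eᵀ = -E → ‖E‖ < δ →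
      ∃ (α' : Fin d → ℝ) (c' : ℝ), (∀ i, 0 < α' i) ∧ (∑ i, α' i = 1) ∧
        ∀ i, ∑ j, ((A + E) i j - σ ^ 2 / 2) * α' j = c' := by
  let shifted (E : Matrix (Fin d) (Fin d) ℝ) : Matrix (Fin d) (Fin d) ℝ :=
    of fun i j => (A + E) i j - σ ^ 2 / 2
  have hA : HasInteriorEqualizer (shifted 0) := by simp only [shifted, add_zero]; exact hC2
  have := hA.nonempty
  have hdet : (bordered (shifted 0)).det ≠ 0 :=
    det_bordered_ne_zero_of_add_transpose_sub_diag_eq (pow_ne_zero 2 hσ.ne') fun i j hij => by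
      simp only [shifted, of_apply, add_zero]
      linarith [hC1 i j hij]
  have hcont : Continuous shifted := by fun_prop
  obtain ⟨δ, hδ, hnear⟩ :=
    Metric.eventually_nhds_iff.1 (hcont.continuousAt.eventually (hA.eventually_nhds hdet))
  exact ⟨δ, hδ, fun E _ hE => hnear (by rwa [dist_zero_right])⟩

/-- Let `d ≥ 2`, `σ > 0`, and let `A` be a `d × d` real matrix satisfying
conditions [C1] and [C2] with parameter `σ`. Then there exists `δ > 0` such that for every
skew-symmetric matrix `E` with operator norm `‖E‖ < δ`, the matrix `A + E` satisfies
condition [C2] with parameter `σ`. -/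
theorem C2_stable_under_small_skew_perturbation {d : ℕ} (hd : 2 ≤ d)
    (σ : ℝ) (hσ : 0 < σ) (A : Matrix (Fin d) (Fin d) ℝ)
    (hC1 : ∀ i j : Fin d, i ≠ j → A i j + A j i - A i i - A j j = σ ^ 2)
    (hC2 : ∃ (α : Fin d → ℝ) (c : ℝ), (∀ i, 0 < α i) ∧ (∑ i, α i = 1) ∧
        ∀ i, ∑ j, (A i j - σ ^ 2 / 2) * α j = c) :
    ∃ δ > (0 : ℝ), ∀ E : Matrix (Fin d) (Fin d) ℝ, Eᵀ = -E → ‖E‖ < δ →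
      ∃ (α' : Fin d → ℝ) (c' : ℝ), (∀ i, 0 < α' i) ∧ (∑ i, α' i = 1) ∧
        ∀ i, ∑ j, ((A + E) i j - σ ^ 2 / 2) * α' j = c' :=
  C2_stable_under_small_skew_perturbation_general σ hσ A hC1 hC2
end

section
/- Let d ≥ 2, σ > 0, and let A be a d×d real matrix satisfying conditions [C1] and [C2] with parameter σ. Then there exist δ > 0 and C > 0 such that for all skew-symmetric d×d real matrices E₁, E₂ with ‖E₁‖ ≤ δ and ‖E₂‖ ≤ δ (operator norm), and all vectors α₁, α₂ ∈ ℝ^d with strictly positive entries summing to 1 such that for each k ∈ {1,2} the vector with i-th entry ∑_j ((A+E_k)_{ij} − σ²/2) (α_k)_j is a constant vector (its entries do not depend on i), one has ‖α₁ − α₂‖₁ ≤ C · ‖E₁ − E₂‖. -/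
open Matrix
open scoped Matrix.Norms.L2Operator

/-!
Write `x = α₁ - α₂`, which sums to `0`. Condition [C1] is stable under adding a skew-symmetric
matrix, and for a matrix `M` satisfying it the quadratic form of `M - σ²/2` on sum-zero vectors is
exactly `-σ²/2 ‖x‖²`: symmetrizing leaves `(Mᵢᵢ + Mⱼⱼ) xᵢ xⱼ` off the diagonal, which sums to `0`.
Subtracting the two equilibrium equations gives `(A + E₁ - σ²/2) x = c - (E₁ - E₂) α₂`, and pairing
with `x` yields `σ²/2 ‖x‖₂² = ⟪x, (E₁ - E₂) α₂⟫ ≤ ‖x‖₂ ‖E₁ - E₂‖`, since `‖α₂‖₂ ≤ 1`; finally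
`‖x‖₁ ≤ d ‖x‖₂`.
-/

namespace Matrix

variable {ι : Type*}

/-- Condition [C1] with parameter `σ` is `A.HasUniformSymmGap (σ ^ 2)`. -/
def HasUniformSymmGap (M : Matrix ι ι ℝ) (s : ℝ) : Prop :=
  ∀ i j, i ≠ j → M i j + M j i - M i i - M j j = s

theorem HasUniformSymmGap.add_of_transpose_eq_neg {A E : Matrix ι ι ℝ} {s : ℝ}
    (hA : A.HasUniformSymmGap s) (hE : Eᵀ = -E) : (A + E).HasUniformSymmGap s := by
  intro i j hij
  have hskew : ∀ k l, E l k = -E k l := fun k l => congrFun (congrFun hE k) l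
  have hdiag : ∀ k, E k k = 0 := fun k => by linarith [hskew k k]
  simp only [add_apply, hdiag, hskew j i]
  linarith [hA i j hij]

variable [Fintype ι]

theorem HasUniformSymmGap.quadratic_form_eq_of_sum_eq_zero {M : Matrix ι ι ℝ} {s : ℝ}
    (hM : M.HasUniformSymmGap s) {x : ι → ℝ} (hx : ∑ i, x i = 0) :
    ∑ i, x i * ∑ j, (M i j - s / 2) * x j = -(s / 2) * ∑ i, x i ^ 2 := by
  classical
  have hpair : ∀ i j, x i * (M i j - s / 2) * x j + x j * (M j i - s / 2) * x i
      = M i i * x i * x j + x i * (M j j * x j) - s * (if i = j then x i * x j else 0) := by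
    intro i j
    rcases eq_or_ne i j with rfl | hij
    · simp only [if_true]; ring
    · rw [if_neg hij]; linear_combination x i * x j * hM i j hij
  have hswap : ∑ i, ∑ j, x i * (M i j - s / 2) * x j
      = ∑ i, ∑ j, x j * (M j i - s / 2) * x i := Finset.sum_comm
  have h2 : 2 * ∑ i, ∑ j, x i * (M i j - s / 2) * x j = -s * ∑ i, x i ^ 2 := by
    calc 2 * ∑ i, ∑ j, x i * (M i j - s / 2) * x j
        = ∑ i, ∑ j, (x i * (M i j - s / 2) * x j + x j * (M j i - s / 2) * x i) := by
          rw [two_mul]; nth_rw 2 [hswap]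
          simp only [← Finset.sum_add_distrib]
      _ = -s * ∑ i, x i ^ 2 := by
          simp only [hpair, Finset.sum_sub_distrib, Finset.sum_add_distrib, ← Finset.mul_sum,
            ← Finset.sum_mul, hx, Finset.sum_ite_eq, Finset.mem_univ, if_true]
          simp [Finset.mul_sum, sq]
  have hQ : ∑ i, x i * ∑ j, (M i j - s / 2) * x j = ∑ i, ∑ j, x i * (M i j - s / 2) * x j := by
    simp only [Finset.mul_sum, mul_assoc]
  linarith

theorem norm_toLp_le_one_of_mem_stdSimplex {v : ι → ℝ} (hv : v ∈ stdSimplex ℝ ι) :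
    ‖WithLp.toLp 2 v‖ ≤ 1 := by
  rw [← sq_le_one_iff₀ (norm_nonneg _), EuclideanSpace.real_norm_sq_eq, ← hv.2]
  refine Finset.sum_le_sum fun i _ => ?_
  have hi := mem_Icc_of_mem_stdSimplex hv i
  nlinarith [hi.1, hi.2]

theorem sum_abs_le_card_mul_norm_toLp (x : ι → ℝ) :
    ∑ i, |x i| ≤ Fintype.card ι * ‖WithLp.toLp 2 x‖ := by
  calc ∑ i, |x i| ≤ ∑ _i : ι, ‖WithLp.toLp 2 x‖ :=
        Finset.sum_le_sum fun i _ => by simpa using PiLp.norm_apply_le (WithLp.toLp 2 x) i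
    _ = Fintype.card ι * ‖WithLp.toLp 2 x‖ := by simp

variable [DecidableEq ι]

theorem dotProduct_mulVec_le (x v : ι → ℝ) (D : Matrix ι ι ℝ) :
    x ⬝ᵥ (D *ᵥ v) ≤ ‖WithLp.toLp 2 x‖ * (‖D‖ * ‖WithLp.toLp 2 v‖) :=
  calc x ⬝ᵥ (D *ᵥ v) = inner ℝ (WithLp.toLp 2 x) (WithLp.toLp 2 (D *ᵥ v)) := by
        rw [EuclideanSpace.inner_toLp_toLp, star_trivial, dotProduct_comm]
    _ ≤ ‖WithLp.toLp 2 x‖ * ‖WithLp.toLp 2 (D *ᵥ v)‖ := real_inner_le_norm _ _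
    _ ≤ ‖WithLp.toLp 2 x‖ * (‖D‖ * ‖WithLp.toLp 2 v‖) := by
        gcongr; exact l2_opNorm_mulVec D (WithLp.toLp 2 v)

theorem HasUniformSymmGap.norm_sub_le_of_equilibrium {M₁ M₂ : Matrix ι ι ℝ} {s : ℝ}
    (hM₁ : M₁.HasUniformSymmGap s) (hs : 0 < s) {α₁ α₂ : ι → ℝ}
    (hsum : ∑ i, α₁ i = ∑ i, α₂ i) {c₁ c₂ : ℝ}
    (h₁ : ∀ i, ∑ j, (M₁ i j - s / 2) * α₁ j = c₁) (h₂ : ∀ i, ∑ j, (M₂ i j - s / 2) * α₂ j = c₂) :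
    ‖WithLp.toLp 2 (α₁ - α₂)‖ ≤ 2 / s * (‖M₁ - M₂‖ * ‖WithLp.toLp 2 α₂‖) := by
  set x := α₁ - α₂
  set y := (M₁ - M₂) *ᵥ α₂
  have hx : ∑ i, x i = 0 := by simp [x, Finset.sum_sub_distrib, hsum]
  have hrow : ∀ i, ∑ j, (M₁ i j - s / 2) * x j = (c₁ - c₂) - y i := by
    intro i
    rw [← h₁ i, ← h₂ i]
    simp only [y, x, mulVec, dotProduct, sub_apply, Pi.sub_apply, ← Finset.sum_sub_distrib]
    exact Finset.sum_congr rfl fun j _ => by ring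
  have henergy : s / 2 * ‖WithLp.toLp 2 x‖ ^ 2 = x ⬝ᵥ y := by
    have hquad := hM₁.quadratic_form_eq_of_sum_eq_zero hx
    simp only [hrow, mul_sub, Finset.sum_sub_distrib, ← Finset.sum_mul, hx, zero_mul] at hquad
    rw [EuclideanSpace.real_norm_sq_eq, dotProduct]
    linarith
  have hbound : s / 2 * ‖WithLp.toLp 2 x‖ ^ 2
      ≤ ‖WithLp.toLp 2 x‖ * (‖M₁ - M₂‖ * ‖WithLp.toLp 2 α₂‖) :=
    henergy ▸ dotProduct_mulVec_le x α₂ (M₁ - M₂)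
  rcases (norm_nonneg (WithLp.toLp 2 x)).eq_or_lt with hzero | hpos
  · rw [← hzero]; positivity
  · rw [div_mul_eq_mul_div, le_div_iff₀ hs]
    nlinarith

end Matrix

theorem nash_equilibrium_lipschitz_in_perturbation_general {d : ℕ} (hd : 2 ≤ d)
    (σ : ℝ) (hσ : 0 < σ) (A : Matrix (Fin d) (Fin d) ℝ)
    (hC1 : ∀ i j : Fin d, i ≠ j → A i j + A j i - A i i - A j j = σ ^ 2) :
    ∃ δ > (0 : ℝ), ∃ C > (0 : ℝ),
      ∀ E₁ E₂ : Matrix (Fin d) (Fin d) ℝ, E₁ᵀ = -E₁ → E₂ᵀ = -E₂ →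
        ‖E₁‖ ≤ δ → ‖E₂‖ ≤ δ →
        ∀ α₁ α₂ : Fin d → ℝ,
          (∀ i, 0 < α₁ i) → (∑ i, α₁ i = 1) →
          (∀ i, 0 < α₂ i) → (∑ i, α₂ i = 1) →
          (∃ c₁ : ℝ, ∀ i, ∑ j, ((A + E₁) i j - σ ^ 2 / 2) * α₁ j = c₁) →
          (∃ c₂ : ℝ, ∀ i, ∑ j, ((A + E₂) i j - σ ^ 2 / 2) * α₂ j = c₂) →
          ∑ i, |α₁ i - α₂ i| ≤ C * ‖E₁ - E₂‖ := by
  have hd₀ : (0 : ℝ) < d := by exact_mod_cast (by omega : 0 < d)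
  refine ⟨1, one_pos, 2 * d / σ ^ 2, by positivity, ?_⟩
  rintro E₁ E₂ hE₁ - - - α₁ α₂ - hsum₁ hpos₂ hsum₂ ⟨c₁, h₁⟩ ⟨c₂, h₂⟩
  have hα₂ : ‖WithLp.toLp 2 α₂‖ ≤ 1 :=
    norm_toLp_le_one_of_mem_stdSimplex ⟨fun i => (hpos₂ i).le, hsum₂⟩
  have hdist := (HasUniformSymmGap.add_of_transpose_eq_neg hC1 hE₁).norm_sub_le_of_equilibrium
    (pow_pos hσ 2) (hsum₁.trans hsum₂.symm) h₁ h₂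
  rw [add_sub_add_left_eq_sub] at hdist
  calc ∑ i, |α₁ i - α₂ i| ≤ d * ‖WithLp.toLp 2 (α₁ - α₂)‖ := by
        simpa using sum_abs_le_card_mul_norm_toLp (α₁ - α₂)
    _ ≤ d * (2 / σ ^ 2 * (‖E₁ - E₂‖ * 1)) := by gcongr; exact hdist.trans (by gcongr)
    _ = 2 * d / σ ^ 2 * ‖E₁ - E₂‖ := by ring

/-- Let `d ≥ 2`, `σ > 0`, and let `A` satisfy conditions [C1] and [C2] with
parameter `σ`. Then there exist `δ > 0` and `C > 0` such that for all skew-symmetric matrices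
`E₁, E₂` of operator norm at most `δ`, and all strictly positive vectors `α₁, α₂` summing to `1`
such that `((A + Eₖ) - σ²/2) αₖ` is a constant vector for `k = 1, 2`, one has
`‖α₁ - α₂‖₁ ≤ C ‖E₁ - E₂‖`. -/
theorem nash_equilibrium_lipschitz_in_perturbation {d : ℕ} (hd : 2 ≤ d)
    (σ : ℝ) (hσ : 0 < σ) (A : Matrix (Fin d) (Fin d) ℝ)
    (hC1 : ∀ i j : Fin d, i ≠ j → A i j + A j i - A i i - A j j = σ ^ 2)
    (hC2 : ∃ (α : Fin d → ℝ) (c : ℝ), (∀ i, 0 < α i) ∧ (∑ i, α i = 1) ∧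
        ∀ i, ∑ j, (A i j - σ ^ 2 / 2) * α j = c) :
    ∃ δ > (0 : ℝ), ∃ C > (0 : ℝ),
      ∀ E₁ E₂ : Matrix (Fin d) (Fin d) ℝ, E₁ᵀ = -E₁ → E₂ᵀ = -E₂ →
        ‖E₁‖ ≤ δ → ‖E₂‖ ≤ δ →
        ∀ α₁ α₂ : Fin d → ℝ,
          (∀ i, 0 < α₁ i) → (∑ i, α₁ i = 1) →
          (∀ i, 0 < α₂ i) → (∑ i, α₂ i = 1) →
          (∃ c₁ : ℝ, ∀ i, ∑ j, ((A + E₁) i j - σ ^ 2 / 2) * α₁ j = c₁) →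
          (∃ c₂ : ℝ, ∀ i, ∑ j, ((A + E₂) i j - σ ^ 2 / 2) * α₂ j = c₂) →
          ∑ i, |α₁ i - α₂ i| ≤ C * ‖E₁ - E₂‖ :=
  nash_equilibrium_lipschitz_in_perturbation_general hd σ hσ A hC1
end

section
/- Let A be a d×d real matrix and σ ∈ ℝ such that A satisfies condition [C1] with parameter σ. Then for every x ∈ ℝ^d with ∑_{i=1}^d x_i = 0, one has xᵀ A x = −(σ²/2) · ∑_{i=1}^d x_i². -/
open Matrix

/-!
Symmetrising, the quadratic form of `A` is half that of `A + Aᵀ`. Condition [C1] pins down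
`A + Aᵀ` up to rank-one terms: `A + Aᵀ = σ² (𝟙𝟙ᵀ - I) + c𝟙ᵀ + 𝟙cᵀ` with `c = diag A`.
Each term `u vᵀ` with `u` or `v` equal to `𝟙` contributes nothing to the quadratic form at
a vector `x` with `𝟙 ⬝ᵥ x = 0`, leaving `-σ² (x ⬝ᵥ x)`.
-/

section QuadraticForm

variable {n R : Type*} [Fintype n] [CommSemiring R]

theorem dotProduct_transpose_mulVec_self (A : Matrix n n R) (x : n → R) :
    x ⬝ᵥ Aᵀ *ᵥ x = x ⬝ᵥ A *ᵥ x := by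
  rw [mulVec_transpose, dotProduct_comm, dotProduct_mulVec]

theorem dotProduct_add_transpose_mulVec_self (A : Matrix n n R) (x : n → R) :
    x ⬝ᵥ (A + Aᵀ) *ᵥ x = 2 * (x ⬝ᵥ A *ᵥ x) := by
  rw [add_mulVec, dotProduct_add, dotProduct_transpose_mulVec_self, two_mul]

theorem dotProduct_vecMulVec_mulVec_self (u v x : n → R) :
    x ⬝ᵥ vecMulVec u v *ᵥ x = (x ⬝ᵥ u) * (v ⬝ᵥ x) := by
  rw [vecMulVec_mulVec, op_smul_eq_smul, dotProduct_smul, smul_eq_mul, mul_comm]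

end QuadraticForm

theorem add_transpose_eq_of_C1 {n : Type*} [Fintype n] [DecidableEq n] {R : Type*}
    [CommRing R] (A : Matrix n n R) (s : R)
    (hC1 : ∀ i j, i ≠ j → A i j + A j i - A i i - A j j = s) :
    A + Aᵀ = s • (vecMulVec 1 1 - 1) + vecMulVec (diag A) 1 + vecMulVec 1 (diag A) := by
  ext i j
  rcases eq_or_ne i j with rfl | hij
  · simp
  · simp [hij, ← hC1 i j hij]
    ring

/-- If a `d × d` real matrix `A` satisfies condition [C1] with parameter `σ`
(i.e. `A i j + A j i - A i i - A j j = σ²` for all `i ≠ j`), then for every vector `x`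
whose entries sum to `0`, the quadratic form `xᵀ A x` equals `-(σ²/2) · ∑ i, x i ²`. -/
theorem quadratic_form_of_C1 {d : ℕ} (A : Matrix (Fin d) (Fin d) ℝ) (σ : ℝ)
    (hC1 : ∀ i j : Fin d, i ≠ j → A i j + A j i - A i i - A j j = σ ^ 2)
    (x : Fin d → ℝ) (hx : ∑ i, x i = 0) :
    x ⬝ᵥ A.mulVec x = -(σ ^ 2 / 2) * ∑ i, (x i) ^ 2 := by
  have hx1 : (1 : Fin d → ℝ) ⬝ᵥ x = 0 := by rwa [one_dotProduct]
  have hnorm : x ⬝ᵥ x = ∑ i, x i ^ 2 := by simp only [dotProduct, sq]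
  have hsym := dotProduct_add_transpose_mulVec_self A x
  rw [add_transpose_eq_of_C1 A _ hC1] at hsym
  simp only [add_mulVec, sub_mulVec, smul_mulVec, dotProduct_add, dotProduct_sub,
    dotProduct_smul, one_mulVec, dotProduct_vecMulVec_mulVec_self, hx1, dotProduct_comm x 1,
    hnorm, mul_zero, zero_mul, add_zero, zero_sub, smul_eq_mul] at hsym
  linarith
end

section
/- Let A be a d×d real matrix and σ ≠ 0 such that A satisfies condition [C1] with parameter σ. Then: (1) for every x ∈ ℝ^d with ∑_i x_i = 0 and x ≠ 0, the vector A x is not a constant vector (i.e. Ax is not a scalar multiple of the all-ones vector); and (2) if α, β ∈ ℝ^d both have entries summing to 1 and there exist constants c, c' ∈ ℝ such that ∑_j (A_{ij} − σ²/2) α_j = c for every i and ∑_j (A_{ij} − σ²/2) β_j = c' for every i, then α = β. -/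
/-!
Condition [C1] pins down the symmetric part of `A` up to rank-one terms:
`A + Aᵀ = a 1ᵀ + 1 aᵀ + σ² (J - I)` with `a` the diagonal of `A` and `J` the all-ones matrix.
On the hyperplane `∑ xᵢ = 0` the rank-one terms and `J` vanish, so `xᵀ A x = -(σ²/2) ‖x‖²`.
If `A x` were constant, `xᵀ A x = c ∑ xᵢ = 0` would force `x = 0`. Uniqueness follows by applying
this to `x = α - β`, since `(A - σ²/2) α` constant means `A α` constant when `∑ αᵢ = 1`.
-/

open Matrix

namespace Matrix

variable {n R : Type*}

section CommRing

variable [CommRing R] {A : Matrix n n R} {s : R}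

theorem add_transpose_eq_of_add_sub_diag [DecidableEq n]
    (hA : ∀ i j, i ≠ j → A i j + A j i - A i i - A j j = s) :
    A + Aᵀ = vecMulVec (diag A) 1 + vecMulVec 1 (diag A) + s • (vecMulVec 1 1 - 1) := by
  ext i j
  by_cases hij : i = j
  · subst hij; simp
  · simp [hij]
    linear_combination hA i j hij

theorem two_mul_dotProduct_mulVec_of_add_sub_diag [Fintype n]
    (hA : ∀ i j, i ≠ j → A i j + A j i - A i i - A j j = s) {x : n → R} (hx : ∑ i, x i = 0) :
    2 * (x ⬝ᵥ A *ᵥ x) = -s * (x ⬝ᵥ x) := by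
  classical
  have hx' : 1 ⬝ᵥ x = 0 := by rw [one_dotProduct, hx]
  have hsym : x ⬝ᵥ (A + Aᵀ) *ᵥ x = 2 * (x ⬝ᵥ A *ᵥ x) := by
    rw [add_mulVec, dotProduct_add, dotProduct_mulVec x Aᵀ, vecMul_transpose, dotProduct_comm _ x]
    ring
  rw [← hsym, add_transpose_eq_of_add_sub_diag hA]
  simp only [add_mulVec, smul_mulVec, sub_mulVec, vecMulVec_mulVec, one_mulVec, dotProduct_add,
    dotProduct_smul, dotProduct_sub, hx', dotProduct_comm x 1]
  simp

end CommRing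

theorem eq_zero_of_mulVec_eq_const_of_add_sub_diag [Fintype n] [CommRing R] [LinearOrder R]
    [IsStrictOrderedRing R] {A : Matrix n n R} {s : R}
    (hA : ∀ i j, i ≠ j → A i j + A j i - A i i - A j j = s) (hs : s ≠ 0)
    {x : n → R} (hx : ∑ i, x i = 0) {c : R} (hc : ∀ i, (A *ᵥ x) i = c) : x = 0 := by
  have hquad : x ⬝ᵥ A *ᵥ x = 0 := by
    simp only [dotProduct, hc, ← Finset.sum_mul, hx, zero_mul]
  have hnorm : s * (x ⬝ᵥ x) = 0 := by
    linear_combination two_mul_dotProduct_mulVec_of_add_sub_diag hA hx - 2 * hquad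
  exact dotProduct_self_eq_zero.mp ((mul_eq_zero.mp hnorm).resolve_left hs)

theorem sum_sub_const_mul_eq_mulVec_sub [Fintype n] [CommRing R] (A : Matrix n n R) (t : R)
    (v : n → R) (i : n) : ∑ j, (A i j - t) * v j = (A *ᵥ v) i - t * ∑ j, v j := by
  simp only [sub_mul, Finset.sum_sub_distrib, Finset.mul_sum, mulVec, dotProduct]

end Matrix

/-- Let `A` satisfy condition [C1] with parameter `σ ≠ 0`. Then:
(1) for every nonzero `x` with entries summing to `0`, `A x` is not a constant vector; and
(2) any two vectors `α`, `β` with entries summing to `1` such that `(A - σ²/2) α` and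
`(A - σ²/2) β` are constant vectors must coincide. -/
theorem C1_nash_uniqueness {d : ℕ} (A : Matrix (Fin d) (Fin d) ℝ) (σ : ℝ) (hσ : σ ≠ 0)
    (hC1 : ∀ i j : Fin d, i ≠ j → A i j + A j i - A i i - A j j = σ ^ 2) :
    (∀ x : Fin d → ℝ, ∑ i, x i = 0 → x ≠ 0 →
        ¬ ∃ c : ℝ, ∀ i, A.mulVec x i = c) ∧
    (∀ α β : Fin d → ℝ, ∑ i, α i = 1 → ∑ i, β i = 1 →
        (∃ c : ℝ, ∀ i, ∑ j, (A i j - σ ^ 2 / 2) * α j = c) →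
        (∃ c' : ℝ, ∀ i, ∑ j, (A i j - σ ^ 2 / 2) * β j = c') →
        α = β) := by
  have hs : σ ^ 2 ≠ 0 := pow_ne_zero 2 hσ
  refine ⟨fun x hx hx0 ⟨c, hc⟩ => hx0 (eq_zero_of_mulVec_eq_const_of_add_sub_diag hC1 hs hx hc),
    fun α β hα hβ ⟨c, hc⟩ ⟨c', hc'⟩ => ?_⟩
  have hsum : ∑ i, (α - β) i = 0 := by simp [Finset.sum_sub_distrib, hα, hβ]
  have hconst : ∀ i, (A *ᵥ (α - β)) i = c - c' := fun i => by
    have hαi := hc i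
    have hβi := hc' i
    rw [sum_sub_const_mul_eq_mulVec_sub, hα] at hαi
    rw [sum_sub_const_mul_eq_mulVec_sub, hβ] at hβi
    rw [mulVec_sub, Pi.sub_apply]
    linarith
  exact sub_eq_zero.mp (eq_zero_of_mulVec_eq_const_of_add_sub_diag hC1 hs hsum hconst)
end

section
/- Let d ≥ 1 and N ≥ 1 be integers, and let m, n : {1,…,d} → ℕ with ∑_{i=1}^d m_i = ∑_{i=1}^d n_i = N. Let G_1, …, G_N be independent real random variables on a probability space, each distributed according to the Gamma distribution with shape 1/N and rate 1. Set Z = ∑_{j=1}^N G_j, M_i = ∑_{k ≤ i} m_k, N_i = ∑_{k ≤ i} n_k (with M_0 = N_0 = 0), and define X_i = (∑_{j = M_{i−1}+1}^{M_i} G_j)/Z and Y_i = (∑_{j = N_{i−1}+1}^{N_i} G_j)/Z for i = 1,…,d. Then E[ ∑_{i=1}^d |X_i − Y_i| ] ≤ ∑_{i=1}^{d−1} 2(d−i)·|m_i − n_i|/N. -/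
/-!
Write `p j = G j / Z`. The blocks defining `X i` and `Y i` are the index intervals
`[SM i, SM (i+1))` and `[SN i, SN (i+1))`, so `|X i - Y i|` is at most the sum of the `p j` over
their symmetric difference, which lies in the gaps between `SM i, SN i` and between
`SM (i+1), SN (i+1)`. The `G j` are i.i.d., so the `p j` are exchangeable and sum to one, whence
`E[p j] = 1 / N`. Hence `E|X i - Y i| ≤ (Δ i + Δ (i+1)) / N` with
`Δ i = |SM i - SN i| ≤ ∑_{k<i} |m k - n k|`, and summing over `i` with `Δ 0 = Δ d = 0` gives the
bound.
-/

open MeasureTheory ProbabilityTheory Finset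
open scoped ENNReal symmDiff

lemma gammaMeasure_Iic_zero (a r : ℝ) : gammaMeasure a r (Set.Iic 0) = 0 := by
  rw [gammaMeasure, withDensity_apply _ measurableSet_Iic,
    Measure.restrict_congr_set Iio_ae_eq_Iic.symm]
  exact lintegral_gammaPDF_of_nonpos le_rfl

lemma ae_pos_of_map_eq_gammaMeasure {Ω : Type*} [MeasurableSpace Ω] {μ : Measure Ω}
    {X : Ω → ℝ} {a r : ℝ} (hX : AEMeasurable X μ) (hlaw : μ.map X = gammaMeasure a r) :
    ∀ᵐ ω ∂μ, 0 < X ω := by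
  refine ae_of_ae_map hX ?_
  rw [hlaw, ae_iff]
  simp only [not_lt]
  exact gammaMeasure_Iic_zero a r

lemma measurePreserving_comp_perm_pi {ι α : Type*} [Fintype ι] [MeasurableSpace α]
    (ν : Measure α) [SigmaFinite ν] (σ : Equiv.Perm ι) :
    MeasurePreserving (fun x : ι → α => x ∘ σ) (Measure.pi fun _ => ν)
      (Measure.pi fun _ => ν) := by
  convert measurePreserving_piCongrLeft (fun _ : ι => ν) σ.symm using 1
  ext x i
  simp [MeasurableEquiv.coe_piCongrLeft, Equiv.piCongrLeft_apply]

lemma lintegral_ofReal_div_sum_eq_inv_card {ι Ω : Type*} [Fintype ι] [MeasurableSpace Ω]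
    {μ : Measure Ω} [IsProbabilityMeasure μ] {ν : Measure ℝ} {G : ι → Ω → ℝ}
    (hGmeas : ∀ j, Measurable (G j)) (hGindep : iIndepFun G μ) (hGdist : ∀ j, μ.map (G j) = ν)
    (hpos : ∀ᵐ ω ∂μ, ∀ j, 0 < G j ω) (j : ι) :
    ∫⁻ ω, ENNReal.ofReal (G j ω / ∑ k, G k ω) ∂μ = (Fintype.card ι : ℝ≥0∞)⁻¹ := by
  classical
  have : IsProbabilityMeasure ν :=
    hGdist j ▸ Measure.isProbabilityMeasure_map (hGmeas j).aemeasurable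
  set ratio : ι → (ι → ℝ) → ℝ≥0∞ := fun j x => ENNReal.ofReal (x j / ∑ k, x k)
  have hratio_meas : ∀ j, Measurable (ratio j) := fun j =>
    ((measurable_pi_apply j).div (measurable_sum _ fun k _ => measurable_pi_apply k)).ennreal_ofReal
  have hvec : Measurable fun ω k => G k ω := measurable_pi_lambda _ hGmeas
  have hlaw : μ.map (fun ω k => G k ω) = Measure.pi fun _ => ν := by
    rw [hGindep.map_fun_eq_pi_map fun k => (hGmeas k).aemeasurable]
    simp only [hGdist]
  have hcomp : ∀ j, ∫⁻ ω, ENNReal.ofReal (G j ω / ∑ k, G k ω) ∂μ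
      = ∫⁻ x, ratio j x ∂(Measure.pi fun _ => ν) := fun j => by
    rw [← hlaw, lintegral_map (hratio_meas j) hvec]
  -- exchangeability: swapping two coordinates preserves the product law and the total sum
  have hexch : ∀ j', ∫⁻ ω, ENNReal.ofReal (G j' ω / ∑ k, G k ω) ∂μ
      = ∫⁻ ω, ENNReal.ofReal (G j ω / ∑ k, G k ω) ∂μ := fun j' => by
    rw [hcomp, hcomp, ← (measurePreserving_comp_perm_pi ν (Equiv.swap j j')).lintegral_comp
      (hratio_meas j)]
    refine lintegral_congr fun x => ?_
    simp only [ratio, Function.comp_apply, Equiv.swap_apply_left,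
      Equiv.sum_comp (Equiv.swap j j') x]
  have hsum_one : ∑ j', ∫⁻ ω, ENNReal.ofReal (G j' ω / ∑ k, G k ω) ∂μ = 1 := by
    rw [← lintegral_finsetSum (f := fun j' ω => ENNReal.ofReal (G j' ω / ∑ k, G k ω)) _
      fun j' _ => (hratio_meas j').comp hvec]
    calc _ = ∫⁻ _, 1 ∂μ := lintegral_congr_ae <| hpos.mono fun ω hω => by
          have hsum_pos : 0 < ∑ k, G k ω := sum_pos (fun k _ => hω k) ⟨j, mem_univ j⟩
          rw [← ENNReal.ofReal_sum_of_nonneg fun k _ => div_nonneg (hω k).le hsum_pos.le,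
            ← sum_div, div_self hsum_pos.ne', ENNReal.ofReal_one]
      _ = 1 := by rw [lintegral_one, measure_univ]
  rw [sum_congr rfl fun j' _ => hexch j', sum_const, card_univ, nsmul_eq_mul] at hsum_one
  exact ENNReal.eq_inv_of_mul_eq_one_left (by rwa [mul_comm] at hsum_one)

lemma abs_sum_sub_sum_le_sum_symmDiff {α : Type*} [DecidableEq α] (s t : Finset α)
    {w : α → ℝ} (hw : ∀ j, 0 ≤ w j) :
    |∑ j ∈ s, w j - ∑ j ∈ t, w j| ≤ ∑ j ∈ s ∆ t, w j := by
  rw [← sum_sdiff_sub_sum_sdiff, symmDiff_def, sup_eq_union, sum_union disjoint_sdiff_sdiff]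
  refine (abs_sub _ _).trans_eq ?_
  rw [abs_of_nonneg (sum_nonneg fun j _ => hw j), abs_of_nonneg (sum_nonneg fun j _ => hw j)]

lemma ofReal_sum_abs_sub_le_sum_symmDiff {ι α : Type*} [Fintype ι] [DecidableEq α]
    (A B : ι → Finset α) {p : α → ℝ} (hp : ∀ j, 0 ≤ p j) :
    ENNReal.ofReal (∑ i, |∑ j ∈ A i, p j - ∑ j ∈ B i, p j|) ≤
      ∑ i, ∑ j ∈ A i ∆ B i, ENNReal.ofReal (p j) := by
  calc _ ≤ ENNReal.ofReal (∑ i, ∑ j ∈ A i ∆ B i, p j) :=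
        ENNReal.ofReal_le_ofReal <| sum_le_sum fun i _ => abs_sum_sub_sum_le_sum_symmDiff _ _ hp
    _ = _ := by
      rw [ENNReal.ofReal_sum_of_nonneg fun i _ => sum_nonneg fun j _ => hp j]
      exact sum_congr rfl fun i _ => ENNReal.ofReal_sum_of_nonneg fun j _ => hp j

lemma card_symmDiff_filter_Ico_le (N a b a' b' : ℕ) :
    (#(univ.filter (fun j : Fin N => a ≤ j ∧ j < b) ∆
        univ.filter (fun j : Fin N => a' ≤ j ∧ j < b')) : ℝ) ≤
      |(a : ℝ) - a'| + |(b : ℝ) - b'| := by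
  have hsub : ((univ.filter (fun j : Fin N => a ≤ j ∧ j < b) ∆
        univ.filter (fun j : Fin N => a' ≤ j ∧ j < b')).map Fin.valEmbedding) ⊆
      Ico (min a a') (max a a') ∪ Ico (min b b') (max b b') := by
    intro x hx
    obtain ⟨j, hj, rfl⟩ := mem_map.1 hx
    simp only [mem_symmDiff, mem_filter, mem_univ, true_and] at hj
    simp only [Fin.valEmbedding_apply, mem_union, mem_Ico]
    omega
  have hcard := (card_le_card hsub).trans (card_union_le _ _)
  rw [card_map, Nat.card_Ico, Nat.card_Ico] at hcard
  calc (#_ : ℝ) ≤ ((max a a' - min a a' + (max b b' - min b b') : ℕ) : ℝ) := by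
        exact_mod_cast hcard
    _ = _ := by
      push_cast [Nat.cast_sub (min_le_max : min a a' ≤ max a a'),
        Nat.cast_sub (min_le_max : min b b' ≤ max b b')]
      rw [max_sub_min_eq_abs', max_sub_min_eq_abs']

lemma sum_range_sum_filter_lt {d : ℕ} (δ : Fin d → ℝ) :
    ∑ i ∈ range d, ∑ k ∈ univ.filter (fun k : Fin d => (k : ℕ) < i), δ k
      = ∑ k : Fin d, ((d : ℝ) - (k + 1)) * δ k := by
  simp_rw [sum_filter]
  rw [sum_comm]
  refine sum_congr rfl fun k _ => ?_
  rw [← sum_filter, sum_const, nsmul_eq_mul]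
  congr 1
  have : (range d).filter (fun i => (k : ℕ) < i) = Ico ((k : ℕ) + 1) d := by
    ext i; simp only [mem_filter, mem_range, mem_Ico]; omega
  rw [this, Nat.card_Ico, Nat.cast_sub k.isLt]
  push_cast; ring

lemma sum_add_succ_le_of_le_sum_filter_lt {d : ℕ} (Δ : ℕ → ℝ) (δ : Fin d → ℝ)
    (hΔ : ∀ i, Δ i ≤ ∑ k ∈ univ.filter (fun k : Fin d => (k : ℕ) < i), δ k)
    (hΔ₀ : 0 ≤ Δ 0) (hΔd : Δ d = 0) :
    ∑ i : Fin d, (Δ i + Δ (i + 1)) ≤ ∑ k : Fin d, 2 * ((d : ℝ) - (k + 1)) * δ k := by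
  have hshift : ∑ i ∈ range d, Δ (i + 1) ≤ ∑ i ∈ range d, Δ i := by
    have := sum_range_succ' Δ d
    rw [sum_range_succ, hΔd] at this
    linarith
  have hle : ∑ i ∈ range d, Δ i
      ≤ ∑ i ∈ range d, ∑ k ∈ univ.filter (fun k : Fin d => (k : ℕ) < i), δ k :=
    sum_le_sum fun i _ => hΔ i
  rw [Fin.sum_univ_eq_sum_range (fun i => Δ i + Δ (i + 1)), sum_add_distrib]
  rw [sum_range_sum_filter_lt] at hle
  calc _ ≤ 2 * ∑ k : Fin d, ((d : ℝ) - (k + 1)) * δ k := by linarith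
    _ = _ := by rw [mul_sum]; exact sum_congr rfl fun k _ => by ring

lemma sum_card_symmDiff_blocks_le {d N : ℕ} (m n : Fin d → ℕ) (hmn : ∑ i, m i = ∑ i, n i)
    (SM SN : ℕ → ℕ)
    (hSM : ∀ i : ℕ, SM i = ∑ k ∈ univ.filter (fun k : Fin d => (k : ℕ) < i), m k)
    (hSN : ∀ i : ℕ, SN i = ∑ k ∈ univ.filter (fun k : Fin d => (k : ℕ) < i), n k) :
    ∑ i : Fin d, (#(univ.filter (fun j : Fin N => SM i ≤ j ∧ j < SM (i + 1)) ∆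
        univ.filter (fun j : Fin N => SN i ≤ j ∧ j < SN (i + 1))) : ℝ) ≤
      ∑ k : Fin d, 2 * ((d : ℝ) - (k + 1)) * |(m k : ℝ) - n k| := by
  have hΔ : ∀ i, |(SM i : ℝ) - SN i| ≤
      ∑ k ∈ univ.filter (fun k : Fin d => (k : ℕ) < i), |(m k : ℝ) - n k| := fun i => by
    rw [hSM, hSN]
    push_cast
    rw [← sum_sub_distrib]
    exact abs_sum_le_sum_abs _ _
  have hΔd : |(SM d : ℝ) - SN d| = 0 := by
    rw [hSM, hSN, filter_true_of_mem fun k _ => k.isLt, hmn, sub_self, abs_zero]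
  exact (sum_le_sum fun i _ => card_symmDiff_filter_Ico_le N _ _ _ _).trans
    (sum_add_succ_le_of_le_sum_filter_lt _ _ hΔ (abs_nonneg _) hΔd)

theorem gamma_block_coupling_total_general {d N : ℕ} (hN : 1 ≤ N)
    (m n : Fin d → ℕ) (hm : ∑ i, m i = N) (hn : ∑ i, n i = N)
    {Ω : Type*} [MeasurableSpace Ω] (μ : Measure Ω) [IsProbabilityMeasure μ]
    (G : Fin N → Ω → ℝ) (hGmeas : ∀ j, Measurable (G j))
    (hGindep : iIndepFun G μ)
    (hGdist : ∀ j, μ.map (G j) = gammaMeasure (1 / N) 1)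
    (Z : Ω → ℝ) (hZ : ∀ ω, Z ω = ∑ j, G j ω)
    (SM SN : ℕ → ℕ)
    (hSM : ∀ i : ℕ, SM i = ∑ k ∈ univ.filter (fun k : Fin d => (k : ℕ) < i), m k)
    (hSN : ∀ i : ℕ, SN i = ∑ k ∈ univ.filter (fun k : Fin d => (k : ℕ) < i), n k)
    (X Y : Fin d → Ω → ℝ)
    (hX : ∀ (i : Fin d) (ω : Ω), X i ω =
      (∑ j ∈ univ.filter (fun j : Fin N => SM (i : ℕ) ≤ (j : ℕ) ∧ (j : ℕ) < SM ((i : ℕ) + 1)),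
        G j ω) / Z ω)
    (hY : ∀ (i : Fin d) (ω : Ω), Y i ω =
      (∑ j ∈ univ.filter (fun j : Fin N => SN (i : ℕ) ≤ (j : ℕ) ∧ (j : ℕ) < SN ((i : ℕ) + 1)),
        G j ω) / Z ω) :
    ∫⁻ ω, ENNReal.ofReal (∑ i, |X i ω - Y i ω|) ∂μ ≤
      ENNReal.ofReal (∑ i ∈ univ.filter (fun i : Fin d => (i : ℕ) + 1 < d),
        2 * ((d : ℝ) - ((i : ℕ) + 1)) * |(m i : ℝ) - (n i : ℝ)| / N) := by
  classical
  set A : Fin d → Finset (Fin N) := fun i =>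
    univ.filter (fun j : Fin N => SM (i : ℕ) ≤ (j : ℕ) ∧ (j : ℕ) < SM ((i : ℕ) + 1))
  set B : Fin d → Finset (Fin N) := fun i =>
    univ.filter (fun j : Fin N => SN (i : ℕ) ≤ (j : ℕ) ∧ (j : ℕ) < SN ((i : ℕ) + 1))
  have hpos : ∀ᵐ ω ∂μ, ∀ j, 0 < G j ω :=
    ae_all_iff.2 fun j => ae_pos_of_map_eq_gammaMeasure (hGmeas j).aemeasurable (hGdist j)
  have hratio : ∀ j, ∫⁻ ω, ENNReal.ofReal (G j ω / Z ω) ∂μ = (N : ℝ≥0∞)⁻¹ := fun j => by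
    simpa only [hZ, Fintype.card_fin] using
      lintegral_ofReal_div_sum_eq_inv_card hGmeas hGindep hGdist hpos j
  have hpt : ∀ᵐ ω ∂μ, ENNReal.ofReal (∑ i, |X i ω - Y i ω|) ≤
      ∑ i, ∑ j ∈ A i ∆ B i, ENNReal.ofReal (G j ω / Z ω) := hpos.mono fun ω hω => by
    have hZ₀ : 0 ≤ Z ω := hZ ω ▸ sum_nonneg fun j _ => (hω j).le
    simp only [hX, hY, sum_div]
    exact ofReal_sum_abs_sub_le_sum_symmDiff A B fun j => div_nonneg (hω j).le hZ₀
  calc _ ≤ ∫⁻ ω, ∑ i, ∑ j ∈ A i ∆ B i, ENNReal.ofReal (G j ω / Z ω) ∂μ := lintegral_mono_ae hpt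
    _ = ∑ i, (#(A i ∆ B i) : ℝ≥0∞) * (N : ℝ≥0∞)⁻¹ := by
      have hZmeas : Measurable Z := funext hZ ▸ measurable_sum _ fun j _ => hGmeas j
      have hmeas : ∀ j, Measurable fun ω => ENNReal.ofReal (G j ω / Z ω) :=
        fun j => ((hGmeas j).div hZmeas).ennreal_ofReal
      rw [lintegral_finsetSum _ fun i _ => measurable_sum _ fun j _ => hmeas j]
      simp only [lintegral_finsetSum _ fun j _ => hmeas j, hratio, sum_const, nsmul_eq_mul]
    _ = ENNReal.ofReal (∑ i, (#(A i ∆ B i) : ℝ) / N) := by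
      rw [ENNReal.ofReal_sum_of_nonneg fun i _ => by positivity]
      refine sum_congr rfl fun i _ => ?_
      rw [ENNReal.ofReal_div_of_pos (by exact_mod_cast hN), ENNReal.ofReal_natCast,
        ENNReal.ofReal_natCast, div_eq_mul_inv]
    _ ≤ _ := by
      refine ENNReal.ofReal_le_ofReal ?_
      rw [← sum_div, ← sum_div, sum_filter_of_ne fun k _ hk => ?_]
      · exact div_le_div_of_nonneg_right
          (sum_card_symmDiff_blocks_le m n (hm.trans hn.symm) SM SN hSM hSN) (Nat.cast_nonneg N)
      · by_contra hkd
        exact hk (by rw [show (d : ℝ) = k + 1 by norm_cast; omega]; ring)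

/-- Coupling bound for grouped sums of i.i.d. `Gamma(1/N, 1)` random
variables: with `X i` and `Y i` the normalized block sums of `G` over the blocks determined
by the partial sums `SM`, `SN` of `m` and `n` (both summing to `N`), one has
`E [∑ i, |X i − Y i|] ≤ ∑_{i=1}^{d-1} 2 (d - i) |m i − n i| / N`. -/
theorem gamma_block_coupling_total {d N : ℕ} (hd : 1 ≤ d) (hN : 1 ≤ N)
    (m n : Fin d → ℕ) (hm : ∑ i, m i = N) (hn : ∑ i, n i = N)
    {Ω : Type*} [MeasurableSpace Ω] (μ : Measure Ω) [IsProbabilityMeasure μ]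
    (G : Fin N → Ω → ℝ) (hGmeas : ∀ j, Measurable (G j))
    (hGindep : iIndepFun G μ)
    (hGdist : ∀ j, μ.map (G j) = gammaMeasure (1 / N) 1)
    (Z : Ω → ℝ) (hZ : ∀ ω, Z ω = ∑ j, G j ω)
    (SM SN : ℕ → ℕ)
    (hSM : ∀ i : ℕ, SM i = ∑ k ∈ univ.filter (fun k : Fin d => (k : ℕ) < i), m k)
    (hSN : ∀ i : ℕ, SN i = ∑ k ∈ univ.filter (fun k : Fin d => (k : ℕ) < i), n k)
    (X Y : Fin d → Ω → ℝ)
    (hX : ∀ (i : Fin d) (ω : Ω), X i ω =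
      (∑ j ∈ univ.filter (fun j : Fin N => SM (i : ℕ) ≤ (j : ℕ) ∧ (j : ℕ) < SM ((i : ℕ) + 1)),
        G j ω) / Z ω)
    (hY : ∀ (i : Fin d) (ω : Ω), Y i ω =
      (∑ j ∈ univ.filter (fun j : Fin N => SN (i : ℕ) ≤ (j : ℕ) ∧ (j : ℕ) < SN ((i : ℕ) + 1)),
        G j ω) / Z ω) :
    ∫⁻ ω, ENNReal.ofReal (∑ i, |X i ω - Y i ω|) ∂μ ≤
      ENNReal.ofReal (∑ i ∈ univ.filter (fun i : Fin d => (i : ℕ) + 1 < d),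
        2 * ((d : ℝ) - ((i : ℕ) + 1)) * |(m i : ℝ) - (n i : ℝ)| / N) :=
  gamma_block_coupling_total_general hN m n hm hn μ G hGmeas hGindep hGdist Z hZ SM SN hSM hSN X Y
    hX hY
end

section
/- Let E be a compact metric space, U ⊆ E an open set, and P a Markov kernel on E such that (P x)(E \ U) = 0 for every x ∈ U. Let H : E → [0,∞] be continuous (as a map into the extended nonnegative reals) with H(x) < ∞ if and only if x ∈ U, and suppose there are constants α ∈ (0,1) and C ≥ 0 such that ∫⁻ H d(P x) ≤ α·H(x) + C for every x ∈ U. Then for every x ∈ U, every cluster point ν (in the topology of weak convergence of probability measures on E) of the sequence (δ_x · Pⁿ)_{n ≥ 0} satisfies ν(E \ U) = 0. -/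
open MeasureTheory ProbabilityTheory Filter
open scoped ENNReal Topology

/-!
The chain started in `U` never leaves `U`, so the drift inequality can be iterated and gives the
uniform bound `∫⁻ H d(δ_x Pⁿ) ≤ H x + C / (1 - α) =: B < ∞`. By Markov's inequality every
`δ_x Pⁿ` gives mass at most `B / r` to the open set `{H > r}`, hence, by the portmanteau theorem,
so does every weak cluster point `ν`. Letting `r → ∞` gives `ν {H = ∞} = 0`, and `{H = ∞} = Uᶜ`.
-/

lemma ENNReal.le_add_div_one_sub_of_le_mul_add {u : ℕ → ℝ≥0∞} {a c : ℝ≥0∞} (ha : a ≤ 1)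
    (hu : ∀ n, u (n + 1) ≤ a * u n + c) (n : ℕ) : u n ≤ u 0 + c / (1 - a) := by
  have hfixed : a * (c / (1 - a)) + c ≤ c / (1 - a) := by
    rcases ha.lt_or_eq with ha | rfl
    · have h1a : 1 - a ≠ 0 := (tsub_pos_of_lt ha).ne'
      refine le_of_eq ?_
      calc a * (c / (1 - a)) + c = (a + (1 - a)) * (c / (1 - a)) := by
            rw [add_mul, ENNReal.mul_div_cancel h1a (by simp)]
        _ = c / (1 - a) := by rw [add_tsub_cancel_of_le ha.le, one_mul]
    · rcases eq_or_ne c 0 with rfl | hc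
      · simp
      · simp [ENNReal.div_zero hc]
  induction n with
  | zero => exact le_self_add
  | succ n ih =>
    calc u (n + 1) ≤ a * u n + c := hu n
      _ ≤ a * (u 0 + c / (1 - a)) + c := by gcongr
      _ = a * u 0 + (a * (c / (1 - a)) + c) := by rw [mul_add, add_assoc]
      _ ≤ u 0 + c / (1 - a) := add_le_add (mul_le_of_le_one_left' ha) hfixed

namespace MeasureTheory

variable {Ω : Type*} [MeasurableSpace Ω]

lemma Measure.bind_apply_compl_eq_zero {μ : Measure Ω} {κ : Kernel Ω Ω} {s : Set Ω}
    (hs : MeasurableSet s) (hκ : ∀ x ∈ s, κ x sᶜ = 0) (hμ : μ sᶜ = 0) :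
    μ.bind κ sᶜ = 0 := by
  rw [Measure.bind_apply hs.compl κ.aemeasurable, lintegral_eq_zero_iff (κ.measurable_coe hs.compl)]
  filter_upwards [measure_eq_zero_iff_ae_notMem.1 hμ] with x hx
  exact hκ x (not_not.1 hx)

lemma Measure.lintegral_bind_le_of_drift {μ : Measure Ω} [IsProbabilityMeasure μ] {κ : Kernel Ω Ω}
    {s : Set Ω} (hμ : μ sᶜ = 0) {f : Ω → ℝ≥0∞} (hf : Measurable f) {a c : ℝ≥0∞}
    (hdrift : ∀ x ∈ s, ∫⁻ y, f y ∂κ x ≤ a * f x + c) :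
    ∫⁻ y, f y ∂μ.bind κ ≤ a * ∫⁻ y, f y ∂μ + c := by
  rw [Measure.lintegral_bind κ.aemeasurable hf.aemeasurable]
  calc ∫⁻ x, ∫⁻ y, f y ∂κ x ∂μ ≤ ∫⁻ x, (a * f x + c) ∂μ := by
        refine lintegral_mono_ae ?_
        filter_upwards [measure_eq_zero_iff_ae_notMem.1 hμ] with x hx
        exact hdrift x (not_not.1 hx)
    _ = a * ∫⁻ y, f y ∂μ + c := by
        rw [lintegral_add_right _ measurable_const, lintegral_const_mul _ hf, lintegral_const,
          measure_univ, mul_one]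

variable [TopologicalSpace Ω] [OpensMeasurableSpace Ω] [HasOuterApproxClosed Ω]
  {ι : Type*} {L : Filter ι} {μs : ι → ProbabilityMeasure Ω} {ν : ProbabilityMeasure Ω}

lemma ProbabilityMeasure.measure_le_of_mapClusterPt (hν : MapClusterPt ν L μs) {G : Set Ω}
    (hG : IsOpen G) {b : ℝ≥0∞} (hb : ∀ᶠ i in L, (μs i : Measure Ω) G ≤ b) :
    (ν : Measure Ω) G ≤ b := by
  -- A cluster point is a limit along the nontrivial filter `𝓝 ν ⊓ map μs L`: no subsequence needed.
  have : (𝓝 ν ⊓ Filter.map μs L).NeBot := hν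
  have hb' : ∀ᶠ ρ : ProbabilityMeasure Ω in 𝓝 ν ⊓ Filter.map μs L, (ρ : Measure Ω) G ≤ b :=
    mem_inf_of_right hb
  calc (ν : Measure Ω) G
      ≤ liminf (fun ρ : ProbabilityMeasure Ω ↦ (ρ : Measure Ω) G) (𝓝 ν ⊓ Filter.map μs L) :=
        ProbabilityMeasure.le_liminf_measure_open_of_tendsto (tendsto_id.mono_left inf_le_left) hG
    _ ≤ b := liminf_le_of_frequently_le' hb'.frequently

lemma ProbabilityMeasure.measure_eq_top_eq_zero_of_mapClusterPt
    (hν : MapClusterPt ν L μs) {f : Ω → ℝ≥0∞} (hf : Continuous f) {B : ℝ≥0∞} (hB : B ≠ ⊤)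
    (hμs : ∀ᶠ i in L, ∫⁻ x, f x ∂(μs i : Measure Ω) ≤ B) :
    (ν : Measure Ω) {x | f x = ⊤} = 0 := by
  have hmarkov {r : ℝ≥0∞} (hr : r ≠ 0) (hr' : r ≠ ⊤) : (ν : Measure Ω) {x | f x = ⊤} ≤ B / r := by
    calc (ν : Measure Ω) {x | f x = ⊤} ≤ (ν : Measure Ω) {x | r < f x} :=
          measure_mono fun x (hx : f x = ⊤) ↦ show r < f x by rw [hx]; exact hr'.lt_top
      _ ≤ B / r := by
          refine measure_le_of_mapClusterPt hν (isOpen_lt continuous_const hf) ?_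
          filter_upwards [hμs] with i hi
          calc (μs i : Measure Ω) {x | r < f x}
              ≤ (μs i : Measure Ω) {x | r ≤ f x} := measure_mono fun _ (hx : r < _) ↦ hx.le
            _ ≤ (∫⁻ x, f x ∂(μs i : Measure Ω)) / r :=
                meas_ge_le_lintegral_div hf.aemeasurable hr hr'
            _ ≤ B / r := by gcongr
  have hlim : Tendsto (fun n : ℕ ↦ B / n) atTop (𝓝 0) := by
    simpa using ENNReal.Tendsto.const_div ENNReal.tendsto_nat_nhds_top (Or.inr hB)
  refine le_antisymm (ge_of_tendsto hlim ?_) zero_le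
  filter_upwards [eventually_ne_atTop 0] with n hn
  exact hmarkov (by exact_mod_cast hn) (ENNReal.natCast_ne_top n)

end MeasureTheory

theorem cluster_points_do_not_charge_boundary_general
    {E : Type*} [MeasurableSpace E] [MetricSpace E] [BorelSpace E]
    (U : Set E) (hU : IsOpen U)
    (P : Kernel E E) [IsMarkovKernel P]
    (hPU : ∀ x ∈ U, (P x) Uᶜ = 0)
    (H : E → ℝ≥0∞) (hHcont : Continuous H) (hHfin : ∀ x : E, H x < ⊤ ↔ x ∈ U)
    (α C : ℝ) (hα : α ∈ Set.Ioo (0 : ℝ) 1)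
    (hdrift : ∀ x ∈ U, ∫⁻ y, H y ∂(P x) ≤ ENNReal.ofReal α * H x + ENNReal.ofReal C)
    (x : E) (hx : x ∈ U)
    (μseq : ℕ → ProbabilityMeasure E)
    (hμ0 : (μseq 0 : Measure E) = Measure.dirac x)
    (hμsucc : ∀ n : ℕ, (μseq (n + 1) : Measure E) = (μseq n : Measure E).bind (fun y => P y))
    (ν : ProbabilityMeasure E) (hν : MapClusterPt ν atTop μseq) :
    (ν : Measure E) Uᶜ = 0 := by
  have hnull (n : ℕ) : (μseq n : Measure E) Uᶜ = 0 := by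
    induction n with
    | zero => simp [hμ0, hx]
    | succ n ih => rw [hμsucc]; exact Measure.bind_apply_compl_eq_zero hU.measurableSet hPU ih
  have hα1 : ENNReal.ofReal α < 1 := ENNReal.ofReal_lt_one.2 hα.2
  have hbound (n : ℕ) : ∫⁻ y, H y ∂(μseq n : Measure E) ≤
      H x + ENNReal.ofReal C / (1 - ENNReal.ofReal α) := by
    have := ENNReal.le_add_div_one_sub_of_le_mul_add hα1.le (fun n ↦ hμsucc n ▸
      Measure.lintegral_bind_le_of_drift (hnull n) hHcont.measurable hdrift) n
    rwa [hμ0, lintegral_dirac' x hHcont.measurable] at this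
  have hB : H x + ENNReal.ofReal C / (1 - ENNReal.ofReal α) ≠ ⊤ :=
    ENNReal.add_ne_top.2 ⟨((hHfin x).2 hx).ne,
      ENNReal.div_ne_top ENNReal.ofReal_ne_top (tsub_pos_of_lt hα1).ne'⟩
  have hUc : Uᶜ = {y | H y = ⊤} := by ext y; simp [← hHfin y, lt_top_iff_ne_top]
  rw [hUc]
  exact ProbabilityMeasure.measure_eq_top_eq_zero_of_mapClusterPt hν hHcont hB
    (Eventually.of_forall hbound)

/-- Let `E` be a compact metric space, `U ⊆ E` open, and `P` a Markov kernel
with `(P x)(Uᶜ) = 0` for `x ∈ U`. Let `H : E → [0,∞]` be continuous with `H x < ∞ ↔ x ∈ U`,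
and suppose `∫⁻ H d(P x) ≤ α H x + C` on `U` for constants `α ∈ (0,1)`, `C ≥ 0`. Then for
every `x ∈ U`, every weak cluster point `ν` of the sequence of laws `(δ_x Pⁿ)ₙ` satisfies
`ν(Uᶜ) = 0`. -/
theorem cluster_points_do_not_charge_boundary
    {E : Type*} [MeasurableSpace E] [MetricSpace E] [CompactSpace E] [BorelSpace E]
    (U : Set E) (hU : IsOpen U)
    (P : Kernel E E) [IsMarkovKernel P]
    (hPU : ∀ x ∈ U, (P x) Uᶜ = 0)
    (H : E → ℝ≥0∞) (hHcont : Continuous H) (hHfin : ∀ x : E, H x < ⊤ ↔ x ∈ U)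
    (α C : ℝ) (hα : α ∈ Set.Ioo (0 : ℝ) 1) (hC : 0 ≤ C)
    (hdrift : ∀ x ∈ U, ∫⁻ y, H y ∂(P x) ≤ ENNReal.ofReal α * H x + ENNReal.ofReal C)
    (x : E) (hx : x ∈ U)
    (μseq : ℕ → ProbabilityMeasure E)
    (hμ0 : (μseq 0 : Measure E) = Measure.dirac x)
    (hμsucc : ∀ n : ℕ, (μseq (n + 1) : Measure E) = (μseq n : Measure E).bind (fun y => P y))
    (ν : ProbabilityMeasure E) (hν : MapClusterPt ν atTop μseq) :
    (ν : Measure E) Uᶜ = 0 :=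
  cluster_points_do_not_charge_boundary_general U hU P hPU H hHcont hHfin α C hα hdrift x hx μseq
    hμ0 hμsucc ν hν
end

section
/- Let (E, ℰ) be a measurable space, P a Markov kernel on E, U ∈ ℰ with (P x)(E \ U) = 0 for every x ∈ U, and H : E → [0,∞] a measurable function with H(x) < ∞ for every x ∈ U. Suppose there are constants α ∈ (0,1) and C ≥ 0 such that ∫⁻ H d(P x) ≤ α·H(x) + C for every x ∈ U. If μ is a probability measure invariant for P with μ(E \ U) = 0, then ∫⁻ H dμ ≤ C/(1−α). -/
/-!
For a truncation level `N < ∞` and a scale `s`, invariance of `μ` and the drift condition give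
`∫ min (s H) N dμ = ∫ P[min (s H) N] dμ ≤ ∫ min (s α H) N dμ + s C`.
Iterating with `s = αⁿ` yields `∫ min H N dμ ≤ ∫ min (αⁿ H) N dμ + C / (1 - α)`, and the first
term tends to `0` by dominated convergence because `H` is finite `μ`-a.e.; letting `N → ∞`
gives the bound. Truncating is what makes the argument work without knowing a priori that
`∫ H dμ < ∞`.
-/

open MeasureTheory ProbabilityTheory Filter Topology Finset
open scoped ENNReal

namespace ProbabilityTheory

variable {E : Type*} [MeasurableSpace E]

lemma lintegral_min_le_min_lintegral {ν : Measure E} [IsZeroOrProbabilityMeasure ν]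
    (f : E → ℝ≥0∞) (N : ℝ≥0∞) :
    ∫⁻ y, min (f y) N ∂ν ≤ min (∫⁻ y, f y ∂ν) N :=
  le_min (lintegral_mono fun _ => min_le_left _ _)
    ((lintegral_mono fun _ => min_le_right _ _).trans <| by
      rw [lintegral_const]; exact mul_le_of_le_one_right' prob_le_one)

lemma tendsto_lintegral_min_pow_mul_nhds_zero {μ : Measure E} [IsFiniteMeasure μ]
    {H : E → ℝ≥0∞} (hH : Measurable H) (hHfin : ∀ᵐ x ∂μ, H x ≠ ∞)
    {a : ℝ≥0∞} (ha : a < 1) {N : ℝ≥0∞} (hN : N ≠ ∞) :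
    Tendsto (fun n : ℕ => ∫⁻ x, min (a ^ n * H x) N ∂μ) atTop (𝓝 0) := by
  have hpointwise : ∀ᵐ x ∂μ, Tendsto (fun n : ℕ => min (a ^ n * H x) N) atTop (𝓝 0) := by
    filter_upwards [hHfin] with x hx
    have hpow : Tendsto (fun n : ℕ => a ^ n * H x) atTop (𝓝 0) := by
      simpa using ENNReal.Tendsto.mul_const (ENNReal.tendsto_pow_atTop_nhds_zero_of_lt_one ha)
        (Or.inr hx)
    simpa using hpow.min (tendsto_const_nhds (x := N))
  simpa using tendsto_lintegral_of_dominated_convergence (fun _ => N)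
    (fun n => (hH.const_mul _).min measurable_const)
    (fun n => ae_of_all _ fun x => min_le_right _ _)
    (by rw [lintegral_const]; exact ENNReal.mul_ne_top hN (measure_ne_top _ _)) hpointwise

variable {P : Kernel E E} [IsMarkovKernel P] {μ : Measure E} [IsProbabilityMeasure μ]
  {H : E → ℝ≥0∞} {a c : ℝ≥0∞}

namespace Kernel.Invariant

lemma lintegral_min_mul_le (hinv : P.Invariant μ) (hH : Measurable H)
    (hdrift : ∀ᵐ x ∂μ, ∫⁻ y, H y ∂(P x) ≤ a * H x + c) (s N : ℝ≥0∞) :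
    ∫⁻ x, min (s * H x) N ∂μ ≤ ∫⁻ x, min (s * a * H x) N ∂μ + s * c := by
  have hmeas : Measurable fun x => min (s * H x) N := (hH.const_mul s).min measurable_const
  calc ∫⁻ x, min (s * H x) N ∂μ = ∫⁻ x, ∫⁻ y, min (s * H y) N ∂(P x) ∂μ := by
        conv_lhs => rw [← hinv.def]
        exact Measure.lintegral_bind P.aemeasurable hmeas.aemeasurable
    _ ≤ ∫⁻ x, (min (s * a * H x) N + s * c) ∂μ := by
        refine lintegral_mono_ae (hdrift.mono fun x hx => ?_)
        calc ∫⁻ y, min (s * H y) N ∂(P x) ≤ min (s * ∫⁻ y, H y ∂(P x)) N := by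
              rw [← lintegral_const_mul s hH]
              exact lintegral_min_le_min_lintegral _ _
          _ ≤ min (s * (a * H x + c)) N := by gcongr
          _ ≤ min (s * a * H x) N + s * c := by
              rw [mul_add, ← mul_assoc, ← min_add_add_right]
              exact min_le_min_left _ le_self_add
    _ = ∫⁻ x, min (s * a * H x) N ∂μ + s * c := by
        rw [lintegral_add_right _ measurable_const, MeasureTheory.lintegral_const, measure_univ,
          mul_one]

lemma lintegral_min_le_pow_add (hinv : P.Invariant μ) (hH : Measurable H)
    (hdrift : ∀ᵐ x ∂μ, ∫⁻ y, H y ∂(P x) ≤ a * H x + c) (N : ℝ≥0∞) (n : ℕ) :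
    ∫⁻ x, min (H x) N ∂μ ≤ ∫⁻ x, min (a ^ n * H x) N ∂μ + (∑ k ∈ range n, a ^ k) * c := by
  induction n with
  | zero => simp
  | succ n ih =>
    calc ∫⁻ x, min (H x) N ∂μ
        ≤ ∫⁻ x, min (a ^ n * H x) N ∂μ + (∑ k ∈ range n, a ^ k) * c := ih
      _ ≤ ∫⁻ x, min (a ^ n * a * H x) N ∂μ + a ^ n * c + (∑ k ∈ range n, a ^ k) * c := by
        gcongr
        exact hinv.lintegral_min_mul_le hH hdrift _ _
      _ = ∫⁻ x, min (a ^ (n + 1) * H x) N ∂μ + (∑ k ∈ range (n + 1), a ^ k) * c := by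
        rw [sum_range_succ, pow_succ]
        ring

lemma lintegral_min_le_div_of_drift (hinv : P.Invariant μ) (hH : Measurable H)
    (hHfin : ∀ᵐ x ∂μ, H x ≠ ∞) (ha : a < 1)
    (hdrift : ∀ᵐ x ∂μ, ∫⁻ y, H y ∂(P x) ≤ a * H x + c) {N : ℝ≥0∞} (hN : N ≠ ∞) :
    ∫⁻ x, min (H x) N ∂μ ≤ c / (1 - a) := by
  have hlim := (tendsto_lintegral_min_pow_mul_nhds_zero hH hHfin ha hN).add_const (c / (1 - a))
  rw [zero_add] at hlim
  refine ge_of_tendsto hlim (Eventually.of_forall fun n => ?_)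
  refine (hinv.lintegral_min_le_pow_add hH hdrift N n).trans ?_
  gcongr
  rw [ENNReal.div_eq_inv_mul, ← ENNReal.tsum_geometric]
  gcongr
  exact ENNReal.sum_le_tsum _

lemma lintegral_le_div_of_drift (hinv : P.Invariant μ) (hH : Measurable H)
    (hHfin : ∀ᵐ x ∂μ, H x ≠ ∞) (ha : a < 1)
    (hdrift : ∀ᵐ x ∂μ, ∫⁻ y, H y ∂(P x) ≤ a * H x + c) :
    ∫⁻ x, H x ∂μ ≤ c / (1 - a) := by
  have hsup : ∀ x, ⨆ N : ℕ, min (H x) N = H x := fun x => by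
    rw [← inf_iSup_eq, ENNReal.iSup_natCast, inf_top_eq]
  calc ∫⁻ x, H x ∂μ = ∫⁻ x, ⨆ N : ℕ, min (H x) N ∂μ := lintegral_congr fun x => (hsup x).symm
    _ = ⨆ N : ℕ, ∫⁻ x, min (H x) N ∂μ :=
        lintegral_iSup (fun N => hH.min measurable_const)
          fun i j hij x => min_le_min_left _ (by exact_mod_cast hij)
    _ ≤ c / (1 - a) := iSup_le fun N =>
        hinv.lintegral_min_le_div_of_drift hH hHfin ha hdrift (ENNReal.natCast_ne_top N)

end Kernel.Invariant

end ProbabilityTheory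

theorem invariant_measure_lyapunov_integrable_general
    {E : Type*} [MeasurableSpace E] (P : Kernel E E) [IsMarkovKernel P]
    (U : Set E)
    (H : E → ℝ≥0∞) (hH : Measurable H) (hHfin : ∀ x ∈ U, H x < ⊤)
    (α C : ℝ) (hα : α ∈ Set.Ioo (0 : ℝ) 1)
    (hdrift : ∀ x ∈ U, ∫⁻ y, H y ∂(P x) ≤ ENNReal.ofReal α * H x + ENNReal.ofReal C)
    (μ : Measure E) [IsProbabilityMeasure μ]
    (hinv : μ.bind (fun x => P x) = μ) (hμU : μ Uᶜ = 0) :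
    ∫⁻ x, H x ∂μ ≤ ENNReal.ofReal (C / (1 - α)) := by
  have hU_ae : ∀ᵐ x ∂μ, x ∈ U := mem_ae_iff.2 hμU
  have hbound := (show P.Invariant μ from hinv).lintegral_le_div_of_drift hH
    (hU_ae.mono fun x hx => (hHfin x hx).ne)
    (ENNReal.ofReal_lt_one.2 hα.2) (hU_ae.mono hdrift)
  rwa [ENNReal.ofReal_div_of_pos (by linarith [hα.2]), ENNReal.ofReal_sub _ hα.1.le,
    ENNReal.ofReal_one]

/-- Foster–Lyapunov drift condition: if `H : E → [0,∞]` is measurable,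
finite on `U`, the kernel `P` does not leave `U`, and `∫⁻ H d(P x) ≤ α H x + C` on `U`
with `α ∈ (0,1)`, `C ≥ 0`, then every invariant probability measure `μ` supported in `U`
satisfies `∫⁻ H dμ ≤ C / (1 - α)`. -/
theorem invariant_measure_lyapunov_integrable
    {E : Type*} [MeasurableSpace E] (P : Kernel E E) [IsMarkovKernel P]
    (U : Set E) (hU : MeasurableSet U) (hPU : ∀ x ∈ U, (P x) Uᶜ = 0)
    (H : E → ℝ≥0∞) (hH : Measurable H) (hHfin : ∀ x ∈ U, H x < ⊤)
    (α C : ℝ) (hα : α ∈ Set.Ioo (0 : ℝ) 1) (hC : 0 ≤ C)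
    (hdrift : ∀ x ∈ U, ∫⁻ y, H y ∂(P x) ≤ ENNReal.ofReal α * H x + ENNReal.ofReal C)
    (μ : Measure E) [IsProbabilityMeasure μ]
    (hinv : μ.bind (fun x => P x) = μ) (hμU : μ Uᶜ = 0) :
    ∫⁻ x, H x ∂μ ≤ ENNReal.ofReal (C / (1 - α)) :=
  invariant_measure_lyapunov_integrable_general P U H hH hHfin α C hα hdrift μ hinv hμU
end
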